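/- arXiv:1505.08133 — 3 statements merged into one kernel-verified Lean document; each statement's English description precedes it below -/
import Mathlib

section
/- For a connected finite undirected graph G without self-loops or multiple edges on N ≥ 2 vertices, the second smallest eigenvalue a(G) of the Laplacian L(G) satisfies a(G) ≥ 2(1 - cos(π/N)). -/
/-!
Sort the entries of `v` as `y₀ ≤ ⋯ ≤ y_{N-1}`. Since the graph is connected, every gap
`(y_k, y_{k+1})` is straddled by an edge, and an edge straddling a run of consecutive gaps
dominates the sum of their squares. Hence the Laplacian quadratic form `μ ∑ vᵢ²` is at least
the energy `∑ (y_{k+1} - y_k)²` of the path, and as `∑ yₖ = 0` (because `v ⟂ 1`) the discrete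
Wirtinger inequality on the path bounds this energy below by `2 (1 - cos (π / N)) ∑ yₖ²`.
Reflecting `y` to an even sequence on the cycle `ZMod (2N)` reduces this to the cycle, where it
is Parseval's identity: the shift multiplies the Fourier coefficient at a character `ψ` by
`ψ (-1) - 1`, of squared modulus `2 (1 - Re ψ (-1)) ≥ 2 (1 - cos (2π / 2N))` for `ψ ≠ 0`,
while the coefficient at `ψ = 0` is `∑ yₖ = 0`.
-/

open Finset Real
open scoped Matrix

lemma AddChar.sum_normSq_sum_mul {α : Type*} [AddCommGroup α] [Fintype α] (f : α → ℂ) :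
    ∑ ψ : AddChar α ℂ, Complex.normSq (∑ x, f x * ψ x) =
      Fintype.card α * ∑ x, Complex.normSq (f x) := by
  classical
  apply Complex.ofReal_injective
  push_cast
  simp_rw [← Complex.mul_conj, map_sum, map_mul, ← AddChar.map_neg_eq_conj, sum_mul_sum]
  calc ∑ ψ : AddChar α ℂ, ∑ x, ∑ y, f x * ψ x * ((starRingEnd ℂ) (f y) * ψ (-y))
      = ∑ x, ∑ y, f x * (starRingEnd ℂ) (f y) * ∑ ψ : AddChar α ℂ, ψ (x - y) := by
        rw [sum_comm]; refine sum_congr rfl fun x _ => ?_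
        rw [sum_comm]; refine sum_congr rfl fun y _ => ?_
        rw [mul_sum]; refine sum_congr rfl fun ψ _ => ?_
        rw [sub_eq_add_neg, AddChar.map_add_eq_mul]; ring
    _ = _ := by
        simp_rw [AddChar.sum_apply_eq_ite, sub_eq_zero, mul_ite, mul_zero, sum_ite_eq,
          mem_univ, if_true, mul_sum]
        exact sum_congr rfl fun x _ => by ring

lemma Real.cos_le_cos_of_le_of_le_two_pi_sub {a x : ℝ} (ha : 0 ≤ a) (hax : a ≤ x)
    (hx : x ≤ 2 * π - a) : cos x ≤ cos a := by
  have h1 : 0 ≤ sin ((x + a) / 2) := sin_nonneg_of_nonneg_of_le_pi (by linarith) (by linarith)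
  have h2 : 0 ≤ sin ((x - a) / 2) := sin_nonneg_of_nonneg_of_le_pi (by linarith) (by linarith)
  nlinarith [cos_sub_cos x a, mul_nonneg h1 h2]

lemma Complex.re_le_cos_of_pow_eq_one {m : ℕ} [NeZero m] {z : ℂ} (hz : z ^ m = 1)
    (hz1 : z ≠ 1) : z.re ≤ Real.cos (2 * π / m) := by
  obtain ⟨i, him, rfl⟩ := (Complex.isPrimitiveRoot_exp m NeZero.out).eq_pow_of_pow_eq_one hz
  have hi : i ≠ 0 := by rintro rfl; exact hz1 (pow_zero _)
  have hexp : Complex.exp (2 * π * Complex.I / m) ^ i =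
      Complex.exp ((2 * π * i / m : ℝ) * Complex.I) := by
    rw [← Complex.exp_nat_mul]; congr 1; push_cast; ring
  rw [hexp, Complex.exp_ofReal_mul_I_re]
  have hm' : (0 : ℝ) < m := by exact_mod_cast Nat.pos_of_neZero m
  have hi1 : (1 : ℝ) ≤ i := by exact_mod_cast Nat.one_le_iff_ne_zero.mpr hi
  have him' : (i : ℝ) + 1 ≤ m := by exact_mod_cast him
  apply Real.cos_le_cos_of_le_of_le_two_pi_sub (by positivity)
  · rw [div_le_div_iff_of_pos_right hm']; nlinarith [pi_pos]
  · rw [div_le_iff₀ hm', sub_mul, div_mul_cancel₀ _ hm'.ne']; nlinarith [pi_pos]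

lemma ZMod.addChar_apply_pow_eq_one {m : ℕ} {M : Type*} [Monoid M] (ψ : AddChar (ZMod m) M)
    (x : ZMod m) : ψ x ^ m = 1 := by
  rw [← AddChar.map_nsmul_eq_pow, nsmul_eq_mul, ZMod.natCast_self, zero_mul,
    AddChar.map_zero_eq_one]

lemma ZMod.addChar_apply_neg_one_ne_one {m : ℕ} {M : Type*} [DivisionCommMonoid M]
    {ψ : AddChar (ZMod m) M} (hψ : ψ ≠ 0) : ψ (-1) ≠ 1 := by
  intro h
  have h1 : ψ 1 = 1 := by rw [← neg_neg (1 : ZMod m), AddChar.map_neg_eq_inv, h, inv_one]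
  refine hψ (AddChar.eq_zero_iff.mpr fun x => ?_)
  rw [← ZMod.intCast_zmod_cast x, ← zsmul_one, AddChar.map_zsmul_eq_zpow, h1, _root_.one_zpow]

lemma Complex.normSq_sub_one_of_norm_eq_one {z : ℂ} (hz : ‖z‖ = 1) :
    Complex.normSq (z - 1) = 2 * (1 - z.re) := by
  rw [Complex.normSq_sub, Complex.normSq_eq_norm_sq, hz]; simp; ring

theorem wirtinger_cycle {m : ℕ} [NeZero m] (f : ZMod m → ℝ) (hf : ∑ x, f x = 0) :
    2 * (1 - Real.cos (2 * π / m)) * ∑ x, f x ^ 2 ≤ ∑ x, (f (x + 1) - f x) ^ 2 := by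
  set F : AddChar (ZMod m) ℂ → ℂ := fun ψ => ∑ x, (f x : ℂ) * ψ x
  have hshift (ψ : AddChar (ZMod m) ℂ) :
      ∑ x, ((f (x + 1) - f x : ℝ) : ℂ) * ψ x = (ψ (-1) - 1) * F ψ := by
    have : ∑ x, (f (x + 1) : ℂ) * ψ x = ∑ x, (f x : ℂ) * ψ (x - 1) :=
      Fintype.sum_equiv (Equiv.addRight 1) _ _ fun x => by simp
    simp_rw [F, Complex.ofReal_sub, sub_mul, sum_sub_distrib, this, one_mul, mul_sum]
    refine congrArg₂ _ (sum_congr rfl fun x _ => ?_) rfl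
    rw [sub_eq_add_neg, AddChar.map_add_eq_mul]
    ring
  have hcoef (ψ : AddChar (ZMod m) ℂ) :
      2 * (1 - Real.cos (2 * π / m)) * Complex.normSq (F ψ) ≤
        Complex.normSq ((ψ (-1) - 1) * F ψ) := by
    rcases eq_or_ne ψ 0 with rfl | hψ
    · simp [F, ← Complex.ofReal_sum, hf]
    rw [Complex.normSq_mul, Complex.normSq_sub_one_of_norm_eq_one (AddChar.norm_apply _ _)]
    have hre := Complex.re_le_cos_of_pow_eq_one (ZMod.addChar_apply_pow_eq_one ψ (-1))
      (ZMod.addChar_apply_neg_one_ne_one hψ)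
    gcongr
    exact Complex.normSq_nonneg _
  have parseval (g : ZMod m → ℝ) :
      ∑ ψ : AddChar (ZMod m) ℂ, Complex.normSq (∑ x, (g x : ℂ) * ψ x) =
        m * ∑ x, g x ^ 2 := by
    simp [AddChar.sum_normSq_sum_mul, ZMod.card, sq]
  have hm : (0 : ℝ) < m := by exact_mod_cast Nat.pos_of_neZero m
  refine le_of_mul_le_mul_left ?_ hm
  calc m * (2 * (1 - Real.cos (2 * π / m)) * ∑ x, f x ^ 2)
      = ∑ ψ, 2 * (1 - Real.cos (2 * π / m)) * Complex.normSq (F ψ) := by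
        rw [← mul_sum, parseval]; ring
    _ ≤ ∑ ψ, Complex.normSq ((ψ (-1) - 1) * F ψ) := sum_le_sum fun ψ _ => hcoef ψ
    _ = m * ∑ x, (f (x + 1) - f x) ^ 2 := by simp_rw [← hshift, parseval]

lemma ZMod.sum_eq_sum_range {M : Type*} [AddCommMonoid M] {m : ℕ} [NeZero m] (F : ZMod m → M) :
    ∑ x, F x = ∑ k ∈ range m, F k :=
  sum_nbij' ZMod.val Nat.cast (by simp [ZMod.val_lt]) (by simp)
    (by simp) (by simp +contextual [Nat.mod_eq_of_lt]) (by simp)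

theorem wirtinger_path (n : ℕ) (y : ℕ → ℝ) (hy : ∑ k ∈ range n, y k = 0) :
    2 * (1 - Real.cos (π / n)) * ∑ k ∈ range n, y k ^ 2 ≤
      ∑ k ∈ range (n - 1), (y (k + 1) - y k) ^ 2 := by
  rcases n with _ | n
  · simp
  have : NeZero (2 * n + 2) := ⟨by omega⟩
  -- `Y` runs along the path and back again: `y 0, …, y n, y n, …, y 0`, periodically.
  set Y : ℕ → ℝ := fun k => y (min (k % (2 * n + 2)) (2 * n + 1 - k % (2 * n + 2)))
  have hY_lo (k : ℕ) (hk : k ≤ n) : Y k = y k := by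
    simp only [Y]; rw [Nat.mod_eq_of_lt (by omega)]; congr 1; omega
  have hY_hi (k : ℕ) (hk : k ≤ n) : Y (n + 1 + k) = y (n - k) := by
    simp only [Y]; rw [Nat.mod_eq_of_lt (by omega)]; congr 1; omega
  have hY_top : Y (2 * n + 2) = y 0 := by simp [Y]
  have hsum (φ : ℝ → ℝ) :
      ∑ k ∈ range (2 * n + 2), φ (Y k) = 2 * ∑ k ∈ range (n + 1), φ (y k) := by
    rw [show 2 * n + 2 = (n + 1) + (n + 1) by ring, sum_range_add, two_mul]
    congr 1
    · exact sum_congr rfl fun k hk => by rw [hY_lo k (by simp at hk; omega)]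
    · rw [← sum_range_reflect]
      refine sum_congr rfl fun k hk => ?_
      rw [mem_range] at hk
      rw [Nat.add_sub_cancel, hY_hi _ (by omega), Nat.sub_sub_self (by omega)]
  have hedge : ∑ k ∈ range (2 * n + 2), (Y (k + 1) - Y k) ^ 2 =
      2 * ∑ k ∈ range n, (y (k + 1) - y k) ^ 2 := by
    rw [show 2 * n + 2 = (n + 1) + (n + 1) by ring, sum_range_add, two_mul, sum_range_succ,
      sum_range_succ]
    have hmid : Y (n + 1) = Y n := by rw [hY_lo n le_rfl]; simpa using hY_hi 0 (Nat.zero_le n)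
    have hend : Y (n + 1 + n + 1) = Y (n + 1 + n) := by
      rw [hY_hi n le_rfl, Nat.sub_self, show n + 1 + n + 1 = 2 * n + 2 by ring, hY_top]
    simp only [hmid, hend, sub_self, ne_eq, OfNat.ofNat_ne_zero, not_false_eq_true, zero_pow,
      add_zero]
    congr 1
    · refine sum_congr rfl fun k hk => ?_
      rw [mem_range] at hk
      rw [hY_lo _ (by omega), hY_lo _ (by omega)]
    · rw [← sum_range_reflect]
      refine sum_congr rfl fun k hk => ?_
      rw [mem_range] at hk
      rw [show n + 1 + (n - 1 - k) + 1 = n + 1 + (n - k) by omega, hY_hi _ (by omega),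
        hY_hi _ (by omega), Nat.sub_sub_self (by omega), show n - (n - 1 - k) = k + 1 by omega]
      ring
  have hval (k : ℕ) : Y (k : ZMod (2 * n + 2)).val = Y k := by
    simp only [ZMod.val_natCast, Y, Nat.mod_mod]
  have hY_sum := hsum id
  have hY_sq := hsum (· ^ 2)
  simp only [id] at hY_sum hY_sq
  have hcyc := wirtinger_cycle (m := 2 * n + 2) (fun x => Y x.val) (by
    rw [ZMod.sum_eq_sum_range]; simp only [hval, hY_sum, hy, mul_zero])
  simp only [ZMod.sum_eq_sum_range, ← Nat.cast_succ, hval, hY_sq, hedge] at hcyc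
  have hcos : 2 * π / ((2 * n + 2 : ℕ) : ℝ) = π / ((n + 1 : ℕ) : ℝ) := by
    push_cast; field_simp
  rw [hcos] at hcyc
  simp only [add_tsub_cancel_right]
  linarith

lemma Monotone.sum_Ico_sq_sub_le_sq_sub {y : ℕ → ℝ} (hy : Monotone y) {p q : ℕ}
    (hpq : p ≤ q) : ∑ k ∈ Ico p q, (y (k + 1) - y k) ^ 2 ≤ (y q - y p) ^ 2 := by
  calc ∑ k ∈ Ico p q, (y (k + 1) - y k) ^ 2 ≤ (∑ k ∈ Ico p q, (y (k + 1) - y k)) ^ 2 :=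
        sum_sq_le_sq_sum_of_nonneg fun k _ => sub_nonneg.2 (hy k.le_succ)
    _ = (y q - y p) ^ 2 := by rw [sum_Ico_sub y hpq]

lemma exists_equivFin_monotone_comp {V α : Type*} [Fintype V] [Nonempty V] [LinearOrder α]
    (f : V → α) :
    ∃ (e : V ≃ Fin (Fintype.card V)) (y : ℕ → α), Monotone y ∧ ∀ a, f a = y (e a) := by
  set N := Fintype.card V
  have hN : 0 < N := Fintype.card_pos
  set u := f ∘ (Fintype.equivFin V).symm
  set σ := Tuple.sort u
  let clamp : ℕ → Fin N := fun k => ⟨min k (N - 1), by omega⟩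
  refine ⟨(Fintype.equivFin V).trans σ.symm, u ∘ σ ∘ clamp,
    (Tuple.monotone_sort u).comp fun k l hkl => min_le_min_right _ hkl, fun a => ?_⟩
  have : clamp ((Fintype.equivFin V).trans σ.symm a) = σ.symm (Fintype.equivFin V a) :=
    Fin.ext (min_eq_left (by omega))
  change f a = u (σ (clamp _))
  rw [this]
  simp [u]

namespace SimpleGraph

variable {V : Type*} {G : SimpleGraph V}

lemma Connected.exists_adj_mem_not_mem (hG : G.Connected) {S : Set V} {a b : V} (ha : a ∈ S)
    (hb : b ∉ S) : ∃ u w, G.Adj u w ∧ u ∈ S ∧ w ∉ S := by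
  obtain ⟨p⟩ := hG.preconnected a b
  obtain ⟨d, -, hd⟩ := p.exists_boundary_dart S ha hb
  exact ⟨d.fst, d.snd, d.adj, hd⟩

variable [Fintype V] [DecidableRel G.Adj]

lemma sum_adj_sq_sub_eq_two_mul {β : Type*} [LinearOrder β] {e : V → β}
    (he : Function.Injective e) (f : V → ℝ) :
    ∑ a, ∑ b, (if G.Adj a b then (f a - f b) ^ 2 else 0) =
      2 * ∑ a, ∑ b, if G.Adj a b ∧ e a < e b then (f b - f a) ^ 2 else 0 := by
  have hsplit (a b : V) : (if G.Adj a b then (f a - f b) ^ 2 else 0) =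
      (if G.Adj a b ∧ e a < e b then (f b - f a) ^ 2 else 0) +
        if G.Adj b a ∧ e b < e a then (f a - f b) ^ 2 else 0 := by
    by_cases hab : G.Adj a b
    · rcases lt_or_gt_of_ne (he.ne hab.ne) with h | h
      · simp [hab, h, h.not_gt, sq, sub_mul, mul_sub]; ring
      · simp [hab, hab.symm, h, h.not_gt]
    · simp [hab, G.adj_comm b a]
  simp_rw [hsplit, sum_add_distrib]
  rw [two_mul]
  exact congrArg _ sum_comm

lemma Connected.sum_sq_gap_le (hG : G.Connected) {N : ℕ} (e : V ≃ Fin N) {y : ℕ → ℝ}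
    (hy : Monotone y) :
    ∑ k ∈ range (N - 1), (y (k + 1) - y k) ^ 2 ≤
      ∑ a, ∑ b, if G.Adj a b ∧ e a < e b then (y (e b) - y (e a)) ^ 2 else 0 := by
  set g : ℕ → ℝ := fun k => (y (k + 1) - y k) ^ 2
  have hg (k : ℕ) : 0 ≤ g k := sq_nonneg _
  have hcover (k : ℕ) (hk : k < N - 1) : ∃ a b, G.Adj a b ∧ k ∈ Ico (e a : ℕ) (e b) := by
    obtain ⟨a, b, hab, ha, hb⟩ := hG.exists_adj_mem_not_mem (S := {a | (e a : ℕ) ≤ k})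
      (a := e.symm ⟨k, by omega⟩) (b := e.symm ⟨k + 1, by omega⟩) (by simp)
      (by simp only [Set.mem_ofPred_eq, Equiv.apply_symm_apply]; omega)
    exact ⟨a, b, hab, mem_Ico.2 ⟨ha, by simpa using hb⟩⟩
  have hedge (a b : V) :
      ∑ k ∈ range (N - 1), (if G.Adj a b ∧ k ∈ Ico (e a : ℕ) (e b) then g k else 0) ≤
        if G.Adj a b ∧ e a < e b then (y (e b) - y (e a)) ^ 2 else 0 := by
    split_ifs with hab
    · rw [← sum_filter]
      calc _ ≤ ∑ k ∈ Ico (e a : ℕ) (e b), g k :=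
            sum_le_sum_of_subset_of_nonneg (fun k hk => (mem_filter.1 hk).2.2)
              fun k _ _ => hg k
        _ ≤ _ := hy.sum_Ico_sq_sub_le_sq_sub hab.2.le
    · refine (sum_eq_zero fun k _ => if_neg fun h => hab ⟨h.1, ?_⟩).le
      have := mem_Ico.1 h.2
      exact Fin.lt_def.2 (by omega)
  calc ∑ k ∈ range (N - 1), g k
      ≤ ∑ k ∈ range (N - 1), ∑ a, ∑ b,
          if G.Adj a b ∧ k ∈ Ico (e a : ℕ) (e b) then g k else 0 := by
        refine sum_le_sum fun k hk => ?_
        obtain ⟨a, b, hab⟩ := hcover k (mem_range.1 hk)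
        have hnonneg (a b : V) :
            0 ≤ if G.Adj a b ∧ k ∈ Ico (e a : ℕ) (e b) then g k else 0 := by
          split_ifs <;> simp [hg]
        calc g k = if G.Adj a b ∧ k ∈ Ico (e a : ℕ) (e b) then g k else 0 := (if_pos hab).symm
          _ ≤ ∑ b, _ := single_le_sum (fun b _ => hnonneg a b) (mem_univ b)
          _ ≤ _ := single_le_sum (fun a _ => sum_nonneg fun b _ => hnonneg a b) (mem_univ a)
    _ = ∑ a, ∑ b, ∑ k ∈ range (N - 1),
          if G.Adj a b ∧ k ∈ Ico (e a : ℕ) (e b) then g k else 0 := by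
        rw [sum_comm]; exact sum_congr rfl fun a _ => sum_comm
    _ ≤ _ := sum_le_sum fun a _ => sum_le_sum fun b _ => hedge a b

theorem Connected.wirtinger (hG : G.Connected) (f : V → ℝ) (hf : ∑ a, f a = 0) :
    2 * (1 - cos (π / Fintype.card V)) * ∑ a, f a ^ 2 ≤
      (∑ a, ∑ b, if G.Adj a b then (f a - f b) ^ 2 else 0) / 2 := by
  have := hG.nonempty
  obtain ⟨e, y, hy, hfy⟩ := exists_equivFin_monotone_comp f
  have hsum (F : ℝ → ℝ) : ∑ k ∈ range (Fintype.card V), F (y k) = ∑ a, F (f a) := by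
    rw [← Fin.sum_univ_eq_sum_range (fun k => F (y k)), ← e.sum_comp]
    simp [hfy]
  calc 2 * (1 - cos (π / Fintype.card V)) * ∑ a, f a ^ 2
      = 2 * (1 - cos (π / Fintype.card V)) * ∑ k ∈ range (Fintype.card V), y k ^ 2 := by
        rw [hsum (· ^ 2)]
    _ ≤ ∑ k ∈ range (Fintype.card V - 1), (y (k + 1) - y k) ^ 2 :=
        wirtinger_path _ y (by simpa using (hsum id).trans hf)
    _ ≤ ∑ a, ∑ b, if G.Adj a b ∧ e a < e b then (y (e b) - y (e a)) ^ 2 else 0 :=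
        hG.sum_sq_gap_le e hy
    _ = _ := by rw [sum_adj_sq_sub_eq_two_mul e.injective]; simp [hfy]

lemma sum_eq_zero_of_lapMatrix_mulVec_eq_smul {R : Type*} [CommRing R] [NoZeroDivisors R]
    [DecidableEq V] {μ : R} {v : V → R} (h : G.lapMatrix R *ᵥ v = μ • v) (hμ : μ ≠ 0) :
    ∑ i, v i = 0 := by
  have : (fun _ => 1) ⬝ᵥ (G.lapMatrix R *ᵥ v) = 0 := by
    rw [Matrix.dotProduct_mulVec, ← Matrix.mulVec_transpose, (G.isSymm_lapMatrix (R := R)).eq,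
      lapMatrix_mulVec_const_eq_zero, zero_dotProduct]
  rw [h, dotProduct_smul, smul_eq_mul] at this
  simpa [dotProduct] using (mul_eq_zero.1 this).resolve_left hμ

end SimpleGraph

theorem algebraic_connectivity_ge_fiedler_bound_general
    {N : ℕ} (G : SimpleGraph (Fin N)) [DecidableRel G.Adj]
    (hconn : G.Connected)
    (μ : ℝ) (v : Fin N → ℝ) (hv : v ≠ 0)
    (heig : (G.lapMatrix ℝ).mulVec v = μ • v) (hμ : μ ≠ 0) :
    2 * (1 - Real.cos (Real.pi / N)) ≤ μ := by
  have hsum : ∑ i, v i = 0 := SimpleGraph.sum_eq_zero_of_lapMatrix_mulVec_eq_smul heig hμ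
  have hpos : 0 < ∑ i, v i ^ 2 := by
    obtain ⟨i, hi⟩ : ∃ i, v i ≠ 0 := by by_contra! h; exact hv (funext h)
    exact sum_pos' (fun i _ => sq_nonneg _) ⟨i, mem_univ i, by positivity⟩
  have hray :
      (∑ i, ∑ j, if G.Adj i j then (v i - v j) ^ 2 else 0) / 2 = μ * ∑ i, v i ^ 2 := by
    rw [← G.lapMatrix_toLinearMap₂' ℝ v, Matrix.toLinearMap₂'_apply', heig, dotProduct_smul,
      smul_eq_mul]
    simp [dotProduct, sq]
  have hbound := hconn.wirtinger v hsum
  rw [Fintype.card_fin, hray] at hbound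
  exact le_of_mul_le_mul_right hbound hpos

/-- Fiedler's bound: for a connected finite simple undirected graph on `N ≥ 2`
vertices, every nonzero eigenvalue of the Laplacian (in particular the algebraic
connectivity, the second smallest eigenvalue) is at least `2 (1 - cos (π / N))`. -/
theorem algebraic_connectivity_ge_fiedler_bound
    {N : ℕ} (hN : 2 ≤ N) (G : SimpleGraph (Fin N)) [DecidableRel G.Adj]
    (hconn : G.Connected)
    (μ : ℝ) (v : Fin N → ℝ) (hv : v ≠ 0)
    (heig : (G.lapMatrix ℝ).mulVec v = μ • v) (hμ : μ ≠ 0) :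
    2 * (1 - Real.cos (Real.pi / N)) ≤ μ :=
  algebraic_connectivity_ge_fiedler_bound_general G hconn μ v hv heig hμ
end

section
/- The Laplacian of a pseudo-connected graph is positive definite. -/
/-- The Laplacian of a graph with self-loops: the Laplacian of the self-loop-free
part plus `e_i e_iᵀ` for each self-loop `(i,i)`, encoded as loop set `s`. -/
def loopLaplacian {N : ℕ} (G : SimpleGraph (Fin N)) [DecidableRel G.Adj]
    (s : Finset (Fin N)) : Matrix (Fin N) (Fin N) ℝ :=
  G.lapMatrix ℝ + Matrix.diagonal (fun i => if i ∈ s then 1 else 0)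

/-- A graph with self-loops (simple graph `G` with loop set `s`) is pseudo-connected
if every vertex is incident to an edge (a self-loop or an edge to another vertex) and
every connected component contains a vertex with a self-loop. -/
def PseudoConnected {N : ℕ} (G : SimpleGraph (Fin N)) (s : Finset (Fin N)) : Prop :=
  (∀ v, v ∈ s ∨ ∃ u, G.Adj v u) ∧ (∀ v, ∃ u ∈ s, G.Reachable v u)

/-!
The quadratic form of the Laplacian splits as `xᵀ L(G°) x + ∑_{i loop} x_i²`, a sum of two
nonnegative terms. If it vanishes, the first term forces `x` to be constant on each connected
component and the second forces `x` to vanish at every loop; since every component contains a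
loop, `x = 0`.
-/

open Matrix Finset

theorem dotProduct_diagonal_indicator_mulVec {n R : Type*} [Fintype n] [DecidableEq n]
    [CommSemiring R] (s : Finset n) (x : n → R) :
    x ⬝ᵥ diagonal (fun i => if i ∈ s then 1 else 0) *ᵥ x = ∑ i ∈ s, x i * x i := by
  simp only [dotProduct, mulVec_diagonal, ite_mul, one_mul, zero_mul, mul_ite, mul_zero,
    sum_ite_mem, univ_inter]

namespace SimpleGraph

variable {V : Type*} [Fintype V] [DecidableEq V] (G : SimpleGraph V) [DecidableRel G.Adj]

theorem dotProduct_lapMatrix_mulVec_nonneg (x : V → ℝ) : 0 ≤ x ⬝ᵥ G.lapMatrix ℝ *ᵥ x := by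
  simpa only [star_trivial] using (posSemidef_lapMatrix ℝ G).dotProduct_mulVec_nonneg x

theorem eq_zero_of_dotProduct_lapMatrix_mulVec_eq_zero {x : V → ℝ}
    (hx : x ⬝ᵥ G.lapMatrix ℝ *ᵥ x = 0) {s : Set V} (hs : ∀ i ∈ s, x i = 0)
    (hreach : ∀ v, ∃ u ∈ s, G.Reachable v u) : x = 0 := by
  have hconst : ∀ i j, G.Reachable i j → x i = x j := by
    rwa [← lapMatrix_toLinearMap₂'_apply'_eq_zero_iff_forall_reachable, toLinearMap₂'_apply']
  funext v
  obtain ⟨u, hu, hvu⟩ := hreach v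
  rw [hconst v u hvu, hs u hu, Pi.zero_apply]

end SimpleGraph

theorem isHermitian_loopLaplacian {N : ℕ} (G : SimpleGraph (Fin N)) [DecidableRel G.Adj]
    (s : Finset (Fin N)) : (loopLaplacian G s).IsHermitian :=
  (G.isHermitian_lapMatrix ℝ).add (isHermitian_diagonal _)

theorem dotProduct_loopLaplacian_mulVec {N : ℕ} (G : SimpleGraph (Fin N)) [DecidableRel G.Adj]
    (s : Finset (Fin N)) (x : Fin N → ℝ) :
    x ⬝ᵥ loopLaplacian G s *ᵥ x = x ⬝ᵥ G.lapMatrix ℝ *ᵥ x + ∑ i ∈ s, x i * x i := by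
  rw [loopLaplacian, add_mulVec, dotProduct_add, dotProduct_diagonal_indicator_mulVec]

/-- The Laplacian of a pseudo-connected graph is positive definite. -/
theorem loopLaplacian_posDef_of_pseudoConnected
    {N : ℕ} (G : SimpleGraph (Fin N)) [DecidableRel G.Adj]
    (s : Finset (Fin N)) (h : PseudoConnected G s) :
    (loopLaplacian G s).PosDef := by
  obtain ⟨-, hreach⟩ := h
  refine posDef_iff_dotProduct_mulVec.mpr ⟨isHermitian_loopLaplacian G s, fun x hx => ?_⟩
  rw [star_trivial, dotProduct_loopLaplacian_mulVec]
  have hlap := G.dotProduct_lapMatrix_mulVec_nonneg x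
  have hloops : 0 ≤ ∑ i ∈ s, x i * x i := sum_nonneg fun i _ => mul_self_nonneg (x i)
  refine (add_nonneg hlap hloops).lt_of_ne fun hzero => hx ?_
  rw [eq_comm, add_eq_zero_iff_of_nonneg hlap hloops, sum_mul_self_eq_zero_iff] at hzero
  exact G.eq_zero_of_dotProduct_lapMatrix_mulVec_eq_zero hzero.1 hzero.2 hreach
end

section
/- Let G be a finite undirected graph on N vertices with self-loops but no multiple edges, and let Ĝ be its lifted graph on 2N+1 vertices. Then every eigenvalue ψ of L(G) is an eigenvalue of L(Ĝ): if L(G)v = ψv, then the vector (v, 0, -v) ∈ ℝ^{2N+1} is an eigenvector of L(Ĝ) with eigenvalue ψ. -/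
/-- The lifted graph of a graph with self-loops `(G, s)` on `N` vertices: a simple
graph on `2N + 1` vertices (two copies of the vertex set plus a middle vertex).
Each non-loop edge `(i,j)` yields edges `(i,j)` and `(i+N+1, j+N+1)`; each
self-loop `(i,i)` yields edges `(i, N+1)` and `(N+1, i+N+1)`, where `N+1` denotes
the middle vertex. -/
def liftedGraph {N : ℕ} (G : SimpleGraph (Fin N)) (s : Finset (Fin N)) :
    SimpleGraph (Fin N ⊕ Unit ⊕ Fin N) where
  Adj a b :=
    match a, b with
    | Sum.inl i, Sum.inl j => G.Adj i j
    | Sum.inl i, Sum.inr (Sum.inl _) => i ∈ s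
    | Sum.inr (Sum.inl _), Sum.inl i => i ∈ s
    | Sum.inr (Sum.inl _), Sum.inr (Sum.inr i) => i ∈ s
    | Sum.inr (Sum.inr i), Sum.inr (Sum.inl _) => i ∈ s
    | Sum.inr (Sum.inr i), Sum.inr (Sum.inr j) => G.Adj i j
    | _, _ => False
  symm := by
    constructor
    rintro (i | u | i) (j | v | j) h <;>
      first | exact h.symm | exact h | cases h
  loopless := by
    constructor
    rintro (i | u | i) h <;> first | exact G.irrefl h | cases h

noncomputable instance {N : ℕ} (G : SimpleGraph (Fin N)) (s : Finset (Fin N)) :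
    DecidableRel (liftedGraph G s).Adj := Classical.decRel _

/-- The Laplacian of the lifted graph (an ordinary loopless graph Laplacian). -/
noncomputable def liftedLaplacian {N : ℕ} (G : SimpleGraph (Fin N))
    (s : Finset (Fin N)) : Matrix (Fin N ⊕ Unit ⊕ Fin N) (Fin N ⊕ Unit ⊕ Fin N) ℝ :=
  (liftedGraph G s).lapMatrix ℝ

/-! The vector `(v, 0, -v)` intertwines the two Laplacians: `L(Ĝ) (v, 0, -v) = (L(G) v, 0, -L(G) v)`.
At a vertex `i` of the first copy, each loop of `G` at `i` has become an edge to the middle vertex,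
where the vector vanishes, so it contributes `v i`, exactly the term `e_i e_iᵀ v` of `L(G) v`; the
second copy is the mirror image for `-v`; and at the middle vertex the contributions `v i` and
`-v i` of the two edges coming from a loop cancel. -/

open Matrix

theorem SimpleGraph.lapMatrix_mulVec_apply_eq_sum {V R : Type*} [Fintype V] [DecidableEq V]
    [NonAssocRing R] (G : SimpleGraph V) [DecidableRel G.Adj] (x : V → R) (a : V) :
    (G.lapMatrix R *ᵥ x) a = ∑ b, if G.Adj a b then x a - x b else 0 := by
  rw [← Finset.sum_filter, ← neighborFinset_eq_filter, Finset.sum_sub_distrib, Finset.sum_const,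
    card_neighborFinset_eq_degree, nsmul_eq_mul, lapMatrix_mulVec_apply]

section LiftVec

variable {α R : Type*} [AddGroup R]

def liftVec (v : α → R) : α ⊕ Unit ⊕ α → R :=
  Sum.elim v (Sum.elim (fun _ => 0) (-v))

theorem liftVec_ne_zero {v : α → R} (hv : v ≠ 0) : liftVec v ≠ 0 :=
  fun h => hv (funext fun a => congrFun h (.inl a))

theorem liftVec_smul {M : Type*} [Monoid M] [DistribMulAction M R] (c : M) (v : α → R) :
    liftVec (c • v) = c • liftVec v := by
  ext (a | u | a) <;> simp [liftVec]

end LiftVec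

theorem loopLaplacian_mulVec_apply {N : ℕ} (G : SimpleGraph (Fin N)) [DecidableRel G.Adj]
    (s : Finset (Fin N)) (v : Fin N → ℝ) (i : Fin N) :
    (loopLaplacian G s *ᵥ v) i = (G.lapMatrix ℝ *ᵥ v) i + if i ∈ s then v i else 0 := by
  simp [loopLaplacian, add_mulVec, mulVec_diagonal]

theorem liftedLaplacian_mulVec_liftVec {N : ℕ} (G : SimpleGraph (Fin N)) [DecidableRel G.Adj]
    (s : Finset (Fin N)) (v : Fin N → ℝ) :
    liftedLaplacian G s *ᵥ liftVec v = liftVec (loopLaplacian G s *ᵥ v) := by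
  ext (i | _ | i) <;>
    simp only [liftedLaplacian, SimpleGraph.lapMatrix_mulVec_apply_eq_sum, Fintype.sum_sum_type]
  · simp [liftedGraph, liftVec, loopLaplacian_mulVec_apply,
      SimpleGraph.lapMatrix_mulVec_apply_eq_sum]
    -- the two sums differ only in the `Decidable` instances of their `if`s
    exact Finset.sum_congr rfl fun j _ => by congr
  · simp [liftedGraph, liftVec]
  · simp [liftedGraph, liftVec, loopLaplacian_mulVec_apply,
      SimpleGraph.lapMatrix_mulVec_apply_eq_sum, ← Finset.sum_neg_distrib]
    congr 1
    · split_ifs <;> ring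
    · exact Finset.sum_congr rfl fun j _ => by split_ifs <;> ring

theorem lifted_laplacian_eigenvalue_general
    {N : ℕ} (G : SimpleGraph (Fin N)) [DecidableRel G.Adj]
    (s : Finset (Fin N))
    (ψ : ℝ) (v : Fin N → ℝ) (hv : v ≠ 0)
    (heig : (loopLaplacian G s).mulVec v = ψ • v) :
    Sum.elim v (Sum.elim (fun _ : Unit => (0:ℝ)) (-v)) ≠ 0 ∧
      (liftedLaplacian G s).mulVec (Sum.elim v (Sum.elim (fun _ : Unit => (0:ℝ)) (-v))) =
        ψ • Sum.elim v (Sum.elim (fun _ : Unit => (0:ℝ)) (-v)) := by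
  change liftVec v ≠ 0 ∧ liftedLaplacian G s *ᵥ liftVec v = ψ • liftVec v
  refine ⟨liftVec_ne_zero hv, ?_⟩
  rw [liftedLaplacian_mulVec_liftVec, heig, liftVec_smul]

/-- Every eigenvalue `ψ` of `L(G)` is an eigenvalue of the Laplacian of the lifted
graph `Ĝ`: if `L(G) v = ψ v` with `v ≠ 0`, then `(v, 0, -v)` is a (nonzero)
eigenvector of `L(Ĝ)` with eigenvalue `ψ`. -/
theorem lifted_laplacian_eigenvalue
    {N : ℕ} (G : SimpleGraph (Fin N)) [DecidableRel G.Adj]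
    (s : Finset (Fin N)) (hs : s.Nonempty)
    (ψ : ℝ) (v : Fin N → ℝ) (hv : v ≠ 0)
    (heig : (loopLaplacian G s).mulVec v = ψ • v) :
    Sum.elim v (Sum.elim (fun _ : Unit => (0:ℝ)) (-v)) ≠ 0 ∧
      (liftedLaplacian G s).mulVec (Sum.elim v (Sum.elim (fun _ : Unit => (0:ℝ)) (-v))) =
        ψ • Sum.elim v (Sum.elim (fun _ : Unit => (0:ℝ)) (-v)) :=
  lifted_laplacian_eigenvalue_general G s ψ v hv heig
end
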